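/- arXiv:1510.08501 — 2 statements merged into one kernel-verified Lean document; each statement's English description precedes it below -/
import Mathlib

section
/- Let H be a Hopf algebra and J a normalized twist for H, written J = Σ J⁽¹⁾ ⊗ J⁽²⁾ with inverse J⁻¹ = Σ J⁻⁽¹⁾ ⊗ J⁻⁽²⁾. Define Q_J = Σ S(J⁽¹⁾)·J⁽²⁾ ∈ H. Then Q_J is invertible with inverse Q_J⁻¹ = Σ J⁻⁽¹⁾·S(J⁻⁽²⁾). -/
/-!
Multiplying the cocycle identity by the inverses of its factors gives
`(1 ⊗ J)(J⁻¹ ⊗ 1) = (id ⊗ Δ)(J⁻¹)(Δ ⊗ id)(J)` and `(J ⊗ 1)(1 ⊗ J⁻¹) = (Δ ⊗ id)(J⁻¹)(id ⊗ Δ)(J)`.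
The linear map `a ⊗ b ⊗ c ↦ a S(b) c` sends the left side of the first identity to `Q_J⁻¹ Q_J`,
while on the right side the antipode axioms collapse both coproducts, leaving
`(id ⊗ ε)(J⁻¹)(ε ⊗ id)(J) = 1`. Likewise `a ⊗ b ⊗ c ↦ S(a) b S(c)` turns the second identity
into `Q_J Q_J⁻¹ = 1`.
-/

open TensorProduct

noncomputable section
variable (K B : Type*) [Field K] [Ring B] [Bialgebra K B]

/-- `ε ⊗ id : B ⊗ B → B`. -/
def epsId : B ⊗[K] B →ₐ[K] B :=
  (Algebra.TensorProduct.lid K B).toAlgHom.comp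
    (Algebra.TensorProduct.map (Bialgebra.counitAlgHom K B) (AlgHom.id K B))

/-- `id ⊗ ε : B ⊗ B → B`. -/
def idEps : B ⊗[K] B →ₐ[K] B :=
  (Algebra.TensorProduct.rid K K B).toAlgHom.comp
    (Algebra.TensorProduct.map (AlgHom.id K B) (Bialgebra.counitAlgHom K B))

/-- `Δ ⊗ id`, landing in `B ⊗ (B ⊗ B)`. -/
def comulId : B ⊗[K] B →ₐ[K] B ⊗[K] (B ⊗[K] B) :=
  (Algebra.TensorProduct.assoc K K K B B B).toAlgHom.comp
    (Algebra.TensorProduct.map (Bialgebra.comulAlgHom K B) (AlgHom.id K B))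

/-- `id ⊗ Δ`, landing in `B ⊗ (B ⊗ B)`. -/
def idComul : B ⊗[K] B →ₐ[K] B ⊗[K] (B ⊗[K] B) :=
  Algebra.TensorProduct.map (AlgHom.id K B) (Bialgebra.comulAlgHom K B)

/-- The cocycle condition `(Δ ⊗ id)(J)·(J ⊗ 1) = (id ⊗ Δ)(J)·(1 ⊗ J)` for a twist. -/
def IsTwist (J : B ⊗[K] B) : Prop :=
  comulId K B J * (Algebra.TensorProduct.assoc K K K B B B (J ⊗ₜ 1)) =
    idComul K B J * ((1 : B) ⊗ₜ J)

/-- Normalization `(ε ⊗ id)(J) = (id ⊗ ε)(J) = 1`. -/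
def IsNormalized (J : B ⊗[K] B) : Prop :=
  epsId K B J = 1 ∧ idEps K B J = 1

/-- The twisted comultiplication `a ↦ J⁻¹·Δ(a)·J` (with `J'` playing the role of `J⁻¹`). -/
def comulJ (J' J : B ⊗[K] B) : B →ₗ[K] B ⊗[K] B :=
  LinearMap.mulLeft K J' ∘ₗ LinearMap.mulRight K J ∘ₗ Coalgebra.comul

end

noncomputable section
variable (K B : Type*) [Field K] [Ring B] [HopfAlgebra K B]

/-- The antipode as a linear map. -/
def anti : B →ₗ[K] B := HopfAlgebra.antipode (R := K) (A := B)

/-- `Q_J = Σ S(J⁽¹⁾)·J⁽²⁾`. -/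
def QJ (J : B ⊗[K] B) : B := LinearMap.mul' K B ((anti K B).rTensor B J)

/-- `Σ J'⁽¹⁾·S(J'⁽²⁾)`; for `J' = J⁻¹` this is the inverse of `Q_J`. -/
def QJinv (J' : B ⊗[K] B) : B := LinearMap.mul' K B ((anti K B).lTensor B J')

/-- The twisted antipode `a ↦ Q_J⁻¹·S(a)·Q_J` (with `J'` playing the role of `J⁻¹`). -/
def antiJ (J' J : B ⊗[K] B) : B →ₗ[K] B :=
  LinearMap.mulLeft K (QJinv K B J') ∘ₗ LinearMap.mulRight K (QJ K B J) ∘ₗ anti K B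

end

open Coalgebra HopfAlgebra

lemma mul_right_inverse_eq_left_inverse_mul {M : Type*} [Monoid M] {x y a b y' a' : M}
    (h : x * a = y * b) (hy : y' * y = 1) (ha : a * a' = 1) : b * a' = y' * x :=
  calc b * a' = y' * (y * b) * a' := by rw [← mul_assoc, hy, one_mul]
    _ = y' * x := by rw [← h, mul_assoc, mul_assoc, ha, mul_one]

noncomputable section

variable {K H : Type*} [Field K] [Ring H] [HopfAlgebra K H]

local notation "assoc₃" => Algebra.TensorProduct.assoc K K K H H H

lemma anti_apply (a : H) : anti K H a = antipode K a := rfl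

lemma QJ_tmul (a b : H) : QJ K H (a ⊗ₜ b) = anti K H a * b := by
  simp [QJ]

lemma QJinv_tmul (a b : H) : QJinv K H (a ⊗ₜ b) = a * anti K H b := by
  simp [QJinv]

lemma QJ_add (x y : H ⊗[K] H) : QJ K H (x + y) = QJ K H x + QJ K H y := by
  simp [QJ]

lemma QJinv_add (x y : H ⊗[K] H) : QJinv K H (x + y) = QJinv K H x + QJinv K H y := by
  simp [QJinv]

lemma QJ_comul (a : H) : QJ K H (comul a) = algebraMap K H (counit a) :=
  mul_antipode_rTensor_comul_apply a

lemma QJinv_comul (a : H) : QJinv K H (comul a) = algebraMap K H (counit a) :=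
  mul_antipode_lTensor_comul_apply a

variable (K H) in
def mulAntipodeMul : H ⊗[K] (H ⊗[K] H) →ₗ[K] H :=
  LinearMap.mul' K H ∘ₗ (LinearMap.mul' K H ∘ₗ (anti K H).rTensor H).lTensor H

variable (K H) in
def antipodeMulAntipode : H ⊗[K] (H ⊗[K] H) →ₗ[K] H :=
  LinearMap.mul' K H ∘ₗ (anti K H).rTensor H ∘ₗ
    (LinearMap.mul' K H ∘ₗ (anti K H).lTensor H).lTensor H

lemma mulAntipodeMul_tmul (a b c : H) :
    mulAntipodeMul K H (a ⊗ₜ (b ⊗ₜ c)) = a * (antipode K b * c) := by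
  simp [mulAntipodeMul, anti_apply]

lemma antipodeMulAntipode_tmul (a b c : H) :
    antipodeMulAntipode K H (a ⊗ₜ (b ⊗ₜ c)) = antipode K a * (b * antipode K c) := by
  simp [antipodeMulAntipode, anti_apply]

lemma mulAntipodeMul_tmul_mul_assoc (a c : H) (x y : H ⊗[K] H) :
    mulAntipodeMul K H ((a ⊗ₜ y) * assoc₃ (x ⊗ₜ c)) =
      a * QJinv K H x * (QJ K H y * c) := by
  induction x using TensorProduct.induction_on with
  | zero => simp [QJinv]
  | add x₁ x₂ h₁ h₂ => simp only [add_tmul, map_add, add_mul, mul_add, QJinv_add, h₁, h₂]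
  | tmul p q =>
    induction y using TensorProduct.induction_on with
    | zero => simp [QJ]
    | add y₁ y₂ h₁ h₂ => simp only [tmul_add, map_add, mul_add, add_mul, QJ_add, h₁, h₂]
    | tmul u v =>
      simp only [Algebra.TensorProduct.assoc_tmul, Algebra.TensorProduct.tmul_mul_tmul,
        mulAntipodeMul_tmul, QJ_tmul, QJinv_tmul, anti_apply, antipode_mul_antidistrib, mul_assoc]

lemma antipodeMulAntipode_assoc_mul_tmul (a c : H) (x y : H ⊗[K] H) :
    antipodeMulAntipode K H (assoc₃ (x ⊗ₜ c) * (a ⊗ₜ y)) =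
      antipode K a * QJ K H x * (QJinv K H y * antipode K c) := by
  induction x using TensorProduct.induction_on with
  | zero => simp [QJ]
  | add x₁ x₂ h₁ h₂ => simp only [add_tmul, map_add, add_mul, mul_add, QJ_add, h₁, h₂]
  | tmul p q =>
    induction y using TensorProduct.induction_on with
    | zero => simp [QJinv]
    | add y₁ y₂ h₁ h₂ => simp only [tmul_add, map_add, mul_add, add_mul, QJinv_add, h₁, h₂]
    | tmul u v =>
      simp only [Algebra.TensorProduct.assoc_tmul, Algebra.TensorProduct.tmul_mul_tmul,
        antipodeMulAntipode_tmul, QJ_tmul, QJinv_tmul, anti_apply, antipode_mul_antidistrib,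
        mul_assoc]

lemma idComul_tmul (a b : H) : idComul K H (a ⊗ₜ b) = a ⊗ₜ comul b := by
  simp [idComul]

lemma comulId_tmul (a b : H) : comulId K H (a ⊗ₜ b) = assoc₃ (comul a ⊗ₜ b) := by
  simp [comulId]

lemma idEps_tmul (a b : H) : idEps K H (a ⊗ₜ b) = counit (R := K) b • a := by
  simp [idEps]

lemma epsId_tmul (a b : H) : epsId K H (a ⊗ₜ b) = counit (R := K) a • b := by
  simp [epsId]

lemma mulAntipodeMul_idComul_mul_comulId (U V : H ⊗[K] H) :
    mulAntipodeMul K H (idComul K H V * comulId K H U) = idEps K H V * epsId K H U := by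
  induction U using TensorProduct.induction_on with
  | zero => simp
  | add U₁ U₂ h₁ h₂ => simp only [map_add, mul_add, h₁, h₂]
  | tmul p q =>
    induction V using TensorProduct.induction_on with
    | zero => simp
    | add V₁ V₂ h₁ h₂ => simp only [map_add, add_mul, h₁, h₂]
    | tmul f g =>
      rw [idComul_tmul, comulId_tmul, mulAntipodeMul_tmul_mul_assoc, QJinv_comul, QJ_comul,
        idEps_tmul, epsId_tmul]
      simp [Algebra.algebraMap_eq_smul_one, smul_smul, mul_comm]

lemma antipodeMulAntipode_comulId_mul_idComul (U V : H ⊗[K] H) :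
    antipodeMulAntipode K H (comulId K H V * idComul K H U) =
      antipode K (idEps K H U) * antipode K (epsId K H V) := by
  induction U using TensorProduct.induction_on with
  | zero => simp
  | add U₁ U₂ h₁ h₂ => simp only [map_add, mul_add, add_mul, h₁, h₂]
  | tmul p q =>
    induction V using TensorProduct.induction_on with
    | zero => simp
    | add V₁ V₂ h₁ h₂ => simp only [map_add, add_mul, mul_add, h₁, h₂]
    | tmul f g =>
      rw [idComul_tmul, comulId_tmul, antipodeMulAntipode_assoc_mul_tmul, QJinv_comul, QJ_comul,
        idEps_tmul, epsId_tmul]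
      simp [Algebra.algebraMap_eq_smul_one, smul_smul, mul_comm]

lemma IsNormalized.of_mul_eq_one {J J' : H ⊗[K] H} (hn : IsNormalized K H J)
    (hJ : J * J' = 1) : IsNormalized K H J' := by
  constructor
  · simpa [hn.1] using congrArg (epsId K H) hJ
  · simpa [hn.2] using congrArg (idEps K H) hJ

lemma IsTwist.one_tmul_mul_assoc_inv {J J' : H ⊗[K] H} (hc : IsTwist K H J)
    (hJ : J * J' = 1) (hJ' : J' * J = 1) :
    ((1 : H) ⊗ₜ J) * assoc₃ (J' ⊗ₜ 1) = idComul K H J' * comulId K H J :=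
  mul_right_inverse_eq_left_inverse_mul hc (by rw [← map_mul, hJ', map_one])
    (by rw [← map_mul, Algebra.TensorProduct.tmul_mul_tmul, hJ, one_mul,
      ← Algebra.TensorProduct.one_def, map_one])

lemma IsTwist.assoc_mul_one_tmul_inv {J J' : H ⊗[K] H} (hc : IsTwist K H J)
    (hJ : J * J' = 1) (hJ' : J' * J = 1) :
    assoc₃ (J ⊗ₜ 1) * ((1 : H) ⊗ₜ J') = comulId K H J' * idComul K H J :=
  mul_right_inverse_eq_left_inverse_mul hc.symm (by rw [← map_mul, hJ', map_one])
    (by rw [Algebra.TensorProduct.tmul_mul_tmul, hJ, one_mul, ← Algebra.TensorProduct.one_def])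

end

variable {K H : Type*} [Field K] [Ring H] [HopfAlgebra K H]

theorem QJ_invertible (J J' : H ⊗[K] H)
    (hJ : J * J' = 1) (hJ' : J' * J = 1) (hc : IsTwist K H J) (hn : IsNormalized K H J) :
    QJ K H J * QJinv K H J' = 1 ∧ QJinv K H J' * QJ K H J = 1 := by
  have hn' := hn.of_mul_eq_one hJ
  constructor
  · have h := congrArg (antipodeMulAntipode K H) (hc.assoc_mul_one_tmul_inv hJ hJ')
    rw [antipodeMulAntipode_assoc_mul_tmul, antipodeMulAntipode_comulId_mul_idComul, hn.2,
      hn'.1] at h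
    simpa using h
  · have h := congrArg (mulAntipodeMul K H) (hc.one_tmul_mul_assoc_inv hJ hJ')
    rw [mulAntipodeMul_tmul_mul_assoc, mulAntipodeMul_idComul_mul_comulId, hn'.2, hn.1] at h
    simpa using h
end

section
/- Let H be a Hopf algebra and J a normalized twist for H. Writing J = Σ J⁽¹⁾ ⊗ J⁽²⁾ and using Sweedler notation for Δ, one has Σ S(J⁽¹⁾)·J⁽²⁾₍₁₎ ⊗ J⁽²⁾₍₂₎ = (Q_J ⊗ 1)·J⁻¹, where Q_J = Σ S(J⁽¹⁾)·J⁽²⁾. -/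
/-!
Let `L (a ⊗ b ⊗ c) = S(a) b ⊗ c`. It is right linear for `H ⊗ H` acting on the last two legs,
and since `Σ S(a₍₁₎) a₍₂₎ = ε(a)` it sends `(Δ ⊗ id)(x) · (w ⊗ 1)` to `Q_w ⊗ (ε ⊗ id)(x)`.
Applying `L` to both sides of the cocycle condition therefore gives
`L ((id ⊗ Δ) J) · J = Q_J ⊗ (ε ⊗ id)(J) = Q_J ⊗ 1`; multiply on the right by `J⁻¹`.
-/

open TensorProduct

namespace HopfAlgebra

open Coalgebra

section Semiring
variable {R A : Type*} [CommSemiring R] [Semiring A] [HopfAlgebra R A]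

theorem mul'_antipode_rTensor_comul_mul (a : A) (w : A ⊗[R] A) :
    LinearMap.mul' R A ((antipode R).rTensor A (comul (R := R) a * w)) =
      counit (R := R) a • LinearMap.mul' R A ((antipode R).rTensor A w) := by
  induction w using TensorProduct.induction_on with
  | zero => simp
  | add x y hx hy => simp only [mul_add, map_add, hx, hy, smul_add]
  | tmul f g =>
    set r := ℛ R a
    rw [← r.eq, Finset.sum_mul]
    simp only [Algebra.TensorProduct.tmul_mul_tmul, map_sum, LinearMap.rTensor_tmul,
      LinearMap.mul'_apply]
    calc ∑ i ∈ r.index, antipode R (r.left i * f) * (r.right i * g)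
        = antipode R f * ((∑ i ∈ r.index, antipode R (r.left i) * r.right i) * g) := by
          simp only [antipode_mul_antidistrib, Finset.mul_sum, Finset.sum_mul, mul_assoc]
      _ = counit a • (antipode R f * g) := by
          rw [sum_antipode_mul_eq_smul, smul_mul_assoc, one_mul, mul_smul_comm]

variable (R A) in
def mulAntipodeRTensor : A ⊗[R] (A ⊗[R] A) →ₗ[R] A ⊗[R] A :=
  TensorProduct.map (LinearMap.mul' R A ∘ₗ (antipode R).rTensor A) LinearMap.id ∘ₗ
    (Algebra.TensorProduct.assoc R R R A A A).symm.toLinearMap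

@[simp]
theorem mulAntipodeRTensor_tmul (a b c : A) :
    mulAntipodeRTensor R A (a ⊗ₜ (b ⊗ₜ c)) = (antipode R a * b) ⊗ₜ c :=
  rfl

theorem mulAntipodeRTensor_assoc_tmul (x : A ⊗[R] A) (c : A) :
    mulAntipodeRTensor R A (Algebra.TensorProduct.assoc R R R A A A (x ⊗ₜ c)) =
      LinearMap.mul' R A ((antipode R).rTensor A x) ⊗ₜ c := by
  induction x using TensorProduct.induction_on with
  | zero => simp
  | add x y hx hy => simp only [TensorProduct.add_tmul, map_add, hx, hy]
  | tmul a b => rfl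

theorem mulAntipodeRTensor_mul_one_tmul (u : A ⊗[R] (A ⊗[R] A)) (v : A ⊗[R] A) :
    mulAntipodeRTensor R A (u * (1 ⊗ₜ v)) = mulAntipodeRTensor R A u * v := by
  induction u using TensorProduct.induction_on with
  | zero => simp
  | add x y hx hy => simp only [add_mul, map_add, hx, hy]
  | tmul a bc =>
    induction bc using TensorProduct.induction_on with
    | zero => simp
    | add x y hx hy => simp only [TensorProduct.tmul_add, add_mul, map_add, hx, hy]
    | tmul b c =>
      induction v using TensorProduct.induction_on with
      | zero => simp
      | add x y hx hy => simp only [TensorProduct.tmul_add, mul_add, map_add, hx, hy]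
      | tmul f g =>
        simp only [Algebra.TensorProduct.tmul_mul_tmul, mul_one, mulAntipodeRTensor_tmul, mul_assoc]

end Semiring

variable {K H : Type*} [Field K] [Ring H] [HopfAlgebra K H]

theorem mulAntipodeRTensor_comulId_mul (x w : H ⊗[K] H) :
    mulAntipodeRTensor K H (comulId K H x * Algebra.TensorProduct.assoc K K K H H H (w ⊗ₜ 1)) =
      LinearMap.mul' K H ((antipode K).rTensor H w) ⊗ₜ epsId K H x := by
  induction x using TensorProduct.induction_on with
  | zero => simp
  | add x y hx hy => simp only [map_add, add_mul, hx, hy, TensorProduct.tmul_add]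
  | tmul a b =>
    have hcomulId :
        comulId K H (a ⊗ₜ b) = Algebra.TensorProduct.assoc K K K H H H (comul a ⊗ₜ b) := rfl
    rw [hcomulId, ← map_mul, Algebra.TensorProduct.tmul_mul_tmul, mul_one,
      mulAntipodeRTensor_assoc_tmul, mul'_antipode_rTensor_comul_mul]
    simp [epsId, TensorProduct.smul_tmul]

end HopfAlgebra

open HopfAlgebra

variable {K H : Type*} [Field K] [Ring H] [HopfAlgebra K H]

theorem twist_lemma_one_general (J J' : H ⊗[K] H)
    (hJ : J * J' = 1) (hc : IsTwist K H J) (hn : IsNormalized K H J) :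
    TensorProduct.map (LinearMap.mul' K H ∘ₗ (anti K H).rTensor H) LinearMap.id
        ((Algebra.TensorProduct.assoc K K K H H H).symm (idComul K H J)) =
      (QJ K H J ⊗ₜ 1) * J' := by
  change mulAntipodeRTensor K H (idComul K H J) = _
  have hJcancel : mulAntipodeRTensor K H (idComul K H J) * J = QJ K H J ⊗ₜ 1 := by
    rw [← mulAntipodeRTensor_mul_one_tmul, ← hc, mulAntipodeRTensor_comulId_mul, hn.1]
    rfl
  rw [← hJcancel, mul_assoc, hJ, mul_one]

theorem twist_lemma_one (J J' : H ⊗[K] H)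
    (hJ : J * J' = 1) (hJ' : J' * J = 1) (hc : IsTwist K H J) (hn : IsNormalized K H J) :
    TensorProduct.map (LinearMap.mul' K H ∘ₗ (anti K H).rTensor H) LinearMap.id
        ((Algebra.TensorProduct.assoc K K K H H H).symm (idComul K H J)) =
      (QJ K H J ⊗ₜ 1) * J' :=
  twist_lemma_one_general J J' hJ hc hn
end
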